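/- Let (M, μ) be a measure space and let Ω : M × M → ℂ satisfy propagator conditions (1), (3) and (4): Ω(x,x) = 1 for all x; Ω(x,y) = conj(Ω(y,x)) for all x, y; and for all x, y the function z ↦ Ω(x,z)Ω(z,y) is μ-integrable with ∫_M Ω(x,z)Ω(z,y) dμ(z) = Ω(x,y). Then |Ω(x,y)| ≤ 1 for all x, y ∈ M. -/

import Mathlib

/-! Hermitian symmetry turns the reproducing property at `(x, x)` into `∫ |Ω(x,z)|² dμ(z) = 1`,
so every row `z ↦ Ω(x,z)` is a unit vector of `L²(μ)` in norm. The reproducing property at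
`(x, y)` together with Cauchy–Schwarz then gives `|Ω(x,y)| ≤ ‖Ω(x,·)‖₂ ‖Ω(·,y)‖₂ = 1`. -/

open MeasureTheory

section CauchySchwarz

variable {α : Type*} [MeasurableSpace α] {μ : Measure α}

theorem integral_mul_le_sqrt_mul_sqrt_of_nonneg {f g : α → ℝ} (hf_nn : 0 ≤ᵐ[μ] f)
    (hg_nn : 0 ≤ᵐ[μ] g) (hf : MemLp f 2 μ) (hg : MemLp g 2 μ) :
    ∫ a, f a * g a ∂μ ≤ √(∫ a, f a ^ 2 ∂μ) * √(∫ a, g a ^ 2 ∂μ) := by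
  have h := integral_mul_le_Lp_mul_Lq_of_nonneg Real.HolderConjugate.two_two hf_nn hg_nn
    (by simpa using hf) (by simpa using hg)
  simpa only [Real.rpow_two, ← Real.sqrt_eq_rpow] using h

theorem memLp_two_of_integrable_sq_of_nonneg {f : α → ℝ} (hf_nn : ∀ a, 0 ≤ f a)
    (hf : Integrable (fun a => f a ^ 2) μ) : MemLp f 2 μ := by
  have hmeas : AEStronglyMeasurable f μ := by
    simpa only [Real.sqrt_sq (hf_nn _)] using
      Real.continuous_sqrt.comp_aestronglyMeasurable hf.aestronglyMeasurable
  exact (memLp_two_iff_integrable_sq hmeas).2 hf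

end CauchySchwarz

namespace Propagator

variable {M : Type*} {Ω : M → M → ℂ}

theorem mul_swap_eq_norm_sq (h3 : ∀ x y, Ω x y = (starRingEnd ℂ) (Ω y x)) (x z : M) :
    Ω x z * Ω z x = ((‖Ω x z‖ ^ 2 : ℝ) : ℂ) := by
  rw [h3 z x, Complex.mul_conj']
  push_cast
  rfl

variable [MeasurableSpace M] {μ : Measure M}

theorem integral_norm_sq_eq_one (h1 : ∀ x, Ω x x = 1)
    (h3 : ∀ x y, Ω x y = (starRingEnd ℂ) (Ω y x))
    (h4 : ∀ x y, ∫ z, Ω x z * Ω z y ∂μ = Ω x y) (x : M) :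
    ∫ z, ‖Ω x z‖ ^ 2 ∂μ = 1 := by
  have h : ∫ z, Ω x z * Ω z x ∂μ = ((∫ z, ‖Ω x z‖ ^ 2 ∂μ : ℝ) : ℂ) := by
    simp only [mul_swap_eq_norm_sq h3]
    exact integral_ofReal
  rw [h4, h1] at h
  exact_mod_cast h.symm

theorem memLp_two_norm (h1 : ∀ x, Ω x x = 1)
    (h3 : ∀ x y, Ω x y = (starRingEnd ℂ) (Ω y x))
    (h4 : ∀ x y, ∫ z, Ω x z * Ω z y ∂μ = Ω x y) (x : M) :
    MemLp (fun z => ‖Ω x z‖) 2 μ := by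
  refine memLp_two_of_integrable_sq_of_nonneg (fun _ => norm_nonneg _) ?_
  refine Integrable.of_integral_ne_zero ?_
  rw [integral_norm_sq_eq_one h1 h3 h4]
  exact one_ne_zero

end Propagator

open Propagator in
theorem propagator_abs_le_one
    {M : Type*} [MeasurableSpace M] (μ : Measure M)
    (Ω : M → M → ℂ)
    (h1 : ∀ x, Ω x x = 1)
    (h3 : ∀ x y, Ω x y = (starRingEnd ℂ) (Ω y x))
    (h4 : ∀ x y, ∫ z, Ω x z * Ω z y ∂μ = Ω x y) :
    ∀ x y, ‖Ω x y‖ ≤ 1 := by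
  intro x y
  have hcol : ∀ z, ‖Ω z y‖ = ‖Ω y z‖ := fun z => by rw [h3 z y, RCLike.norm_conj]
  calc ‖Ω x y‖ = ‖∫ z, Ω x z * Ω z y ∂μ‖ := by rw [h4]
    _ ≤ ∫ z, ‖Ω x z‖ * ‖Ω z y‖ ∂μ := by
        simpa only [norm_mul] using norm_integral_le_integral_norm (fun z => Ω x z * Ω z y)
    _ ≤ √(∫ z, ‖Ω x z‖ ^ 2 ∂μ) * √(∫ z, ‖Ω z y‖ ^ 2 ∂μ) :=
        integral_mul_le_sqrt_mul_sqrt_of_nonneg (.of_forall fun _ => norm_nonneg _)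
          (.of_forall fun _ => norm_nonneg _) (memLp_two_norm h1 h3 h4 x)
          (funext hcol ▸ memLp_two_norm h1 h3 h4 y)
    _ = 1 := by
        simp only [hcol, integral_norm_sq_eq_one h1 h3 h4, Real.sqrt_one, mul_one]
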